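/- Let B be a real Banach space, Φ : B → ℝ a convex Gâteaux differentiable functional with derivative DΦ : B → B*, and S ⊆ B a convex set. Let f' ∈ B and suppose π ∈ S minimizes g ↦ D_Φ(g, f') over S, where D_Φ(f, f'') := Φ(f) − Φ(f'') − ⟨f − f'', DΦ(f'')⟩ is the Bregman divergence. Then for every f ∈ S: ⟨π − f, DΦ(π) − DΦ(f')⟩ ≤ 0. -/

import Mathlib

open Filter Topology

/-! Moving from `π` towards `f ∈ S` stays in `S`, so the one-sided derivative of `g ↦ D_Φ(g, f')`
at `π` in the direction `f - π` is nonnegative. Since `D_Φ(·, f')` differs from `Φ` by an affine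
function, that derivative is `⟨f - π, DΦ(π) - DΦ(f')⟩`. -/

/-- Bregman divergence of `Φ` with derivative `DΦ`. -/
noncomputable def bregmanDiv {B : Type*} [NormedAddCommGroup B] [NormedSpace ℝ B]
    (Φ : B → ℝ) (DΦ : B → (B →L[ℝ] ℝ)) (f f'' : B) : ℝ :=
  Φ f - Φ f'' - DΦ f'' (f - f'')

theorem IsMinOn.nonneg_of_tendsto_slope {E : Type*} [AddCommGroup E] [Module ℝ E]
    {S : Set E} (hS : Convex ℝ S) {ψ : E → ℝ} {x y : E} (hmin : IsMinOn ψ S x)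
    (hx : x ∈ S) (hy : y ∈ S) {L : ℝ}
    (hL : Tendsto (fun s : ℝ => (ψ (x + s • (y - x)) - ψ x) / s) (𝓝[>] 0) (𝓝 L)) :
    0 ≤ L := by
  refine ge_of_tendsto hL ?_
  filter_upwards [Ioc_mem_nhdsGT zero_lt_one] with s ⟨hs0, hs1⟩
  have hmem : x + s • (y - x) ∈ S := hS.add_smul_sub_mem hx hy ⟨hs0.le, hs1⟩
  exact div_nonneg (sub_nonneg.mpr (hmin hmem)) hs0.le

theorem bregmanDiv_add_smul_sub {B : Type*} [NormedAddCommGroup B] [NormedSpace ℝ B]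
    (Φ : B → ℝ) (DΦ : B → (B →L[ℝ] ℝ)) (f f'' h : B) (s : ℝ) :
    bregmanDiv Φ DΦ (f + s • h) f'' - bregmanDiv Φ DΦ f f'' =
      Φ (f + s • h) - Φ f - s * DΦ f'' h := by
  have hsplit : f + s • h - f'' = (f - f'') + s • h := by abel
  simp only [bregmanDiv, hsplit, map_add, map_smul, smul_eq_mul]
  ring

theorem tendsto_bregmanDiv_slope {B : Type*} [NormedAddCommGroup B] [NormedSpace ℝ B]
    (Φ : B → ℝ) (DΦ : B → (B →L[ℝ] ℝ)) {f h : B}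
    (hΦ : Tendsto (fun s : ℝ => (Φ (f + s • h) - Φ f) / s) (𝓝[≠] 0) (𝓝 (DΦ f h)))
    (f'' : B) :
    Tendsto (fun s : ℝ => (bregmanDiv Φ DΦ (f + s • h) f'' - bregmanDiv Φ DΦ f f'') / s)
      (𝓝[≠] 0) (𝓝 (DΦ f h - DΦ f'' h)) := by
  refine (hΦ.sub_const (DΦ f'' h)).congr' ?_
  filter_upwards [self_mem_nhdsWithin] with s (hs : s ≠ 0)
  rw [bregmanDiv_add_smul_sub, sub_div _ (s * _), mul_div_cancel_left₀ _ hs]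

theorem stmt_6_general {B : Type*} [NormedAddCommGroup B] [NormedSpace ℝ B]
    (Φ : B → ℝ) (DΦ : B → (B →L[ℝ] ℝ))
    (hgateaux : ∀ f h : B,
      Tendsto (fun s : ℝ => (Φ (f + s • h) - Φ f) / s) (𝓝[≠] (0 : ℝ)) (𝓝 (DΦ f h)))
    (S : Set B) (hS : Convex ℝ S)
    (f' π : B) (hπS : π ∈ S)
    (hmin : ∀ g ∈ S, bregmanDiv Φ DΦ π f' ≤ bregmanDiv Φ DΦ g f') :
    ∀ f ∈ S, (DΦ π - DΦ f') (π - f) ≤ 0 := by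
  intro f hf
  have hslope := (tendsto_bregmanDiv_slope Φ DΦ (hgateaux π (f - π)) f').mono_left
    (nhdsGT_le_nhdsNE 0)
  have hdir : 0 ≤ DΦ π (f - π) - DΦ f' (f - π) :=
    IsMinOn.nonneg_of_tendsto_slope (ψ := (bregmanDiv Φ DΦ · f')) hS hmin hπS hf hslope
  rw [← neg_sub f π, map_neg, sub_apply]
  linarith

/-- If `π` is the Bregman projection of `f'` onto a convex set `S` (for a convex
Gâteaux differentiable `Φ`), then `⟨π − f, DΦ(π) − DΦ(f')⟩ ≤ 0` for every `f ∈ S`. -/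
theorem stmt_6 {B : Type*} [NormedAddCommGroup B] [NormedSpace ℝ B] [CompleteSpace B]
    (Φ : B → ℝ) (DΦ : B → (B →L[ℝ] ℝ))
    (hconv : ConvexOn ℝ Set.univ Φ)
    (hgateaux : ∀ f h : B,
      Tendsto (fun s : ℝ => (Φ (f + s • h) - Φ f) / s) (𝓝[≠] (0 : ℝ)) (𝓝 (DΦ f h)))
    (S : Set B) (hS : Convex ℝ S)
    (f' π : B) (hπS : π ∈ S)
    (hmin : ∀ g ∈ S, bregmanDiv Φ DΦ π f' ≤ bregmanDiv Φ DΦ g f') :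
    ∀ f ∈ S, (DΦ π - DΦ f') (π - f) ≤ 0 :=
  stmt_6_general Φ DΦ hgateaux S hS f' π hπS hmin
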